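/- arXiv:0909.0602 — 3 statements merged into one kernel-verified Lean document; each statement's English description precedes it below -/
import Mathlib

section
/- Let Δ = {(x_i, y_j, z_{i,j}, t_{i,j})} and Δ* = {(x*_i, y*_j, z_{i,j}, t_{i,j})} be two sets of generalized interpolation data having the same z-values, the same t-values and the same parameters α_{n,m}, β_{n,m}, γ_{n,m}, whose knots satisfy the invariance-of-ratio condition. Then a pair of continuous functions (F₁, F₂) on S is the CHFIS pair for Δ if and only if the pair (F₁ ∘ K, F₂ ∘ K) on S* (i.e. F ∘ R⁻¹) is the CHFIS pair for Δ*. -/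
open Real Set

noncomputable section

/-- `z_eva` (resp. `t_eva`) from the paper: `z N M - z N 0 - z 0 M + z 0 0`. -/
def eva (N M : ℕ) (z : ℕ → ℕ → ℝ) : ℝ := z N M - z N 0 - z 0 M + z 0 0

/-- The coefficient `g_{n,m}` determined by the join-up conditions. -/
def gCoef (N M : ℕ) (x y : ℕ → ℝ) (z t : ℕ → ℕ → ℝ) (a b : ℕ → ℕ → ℝ) (n m : ℕ) : ℝ :=
  (z (n-1) (m-1) - z (n-1) m - z n (m-1) + z n m
    - a n m * eva N M z - b n m * eva N M t) / ((x 0 - x N) * (y 0 - y M))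

/-- The coefficient `e_{n,m}`. -/
def eCoef (N M : ℕ) (x y : ℕ → ℝ) (z t : ℕ → ℕ → ℝ) (a b : ℕ → ℕ → ℝ) (n m : ℕ) : ℝ :=
  (z (n-1) (m-1) - z n (m-1) - a n m * (z 0 0 - z N 0) - b n m * (t 0 0 - t N 0)
    - gCoef N M x y z t a b n m * (x 0 - x N) * y 0) / (x 0 - x N)

/-- The coefficient `f_{n,m}`. -/
def fCoef (N M : ℕ) (x y : ℕ → ℝ) (z t : ℕ → ℕ → ℝ) (a b : ℕ → ℕ → ℝ) (n m : ℕ) : ℝ :=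
  (z (n-1) (m-1) - z (n-1) m - a n m * (z 0 0 - z 0 M) - b n m * (t 0 0 - t 0 M)
    - gCoef N M x y z t a b n m * (y 0 - y M) * x 0) / (y 0 - y M)

/-- The coefficient `k_{n,m}`. -/
def kCoef (N M : ℕ) (x y : ℕ → ℝ) (z t : ℕ → ℕ → ℝ) (a b : ℕ → ℕ → ℝ) (n m : ℕ) : ℝ :=
  z n m - eCoef N M x y z t a b n m * x N - fCoef N M x y z t a b n m * y M
    - a n m * z N M - b n m * t N M - gCoef N M x y z t a b n m * x N * y M

/-- `p_{n,m}(X,Y) = e_{n,m} X + f_{n,m} Y + g_{n,m} X Y + k_{n,m}`. -/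
def pMap (N M : ℕ) (x y : ℕ → ℝ) (z t : ℕ → ℕ → ℝ) (a b : ℕ → ℕ → ℝ) (n m : ℕ)
    (X Y : ℝ) : ℝ :=
  eCoef N M x y z t a b n m * X + fCoef N M x y z t a b n m * Y
    + gCoef N M x y z t a b n m * X * Y + kCoef N M x y z t a b n m

/-- `q_{n,m}(X,Y) = ẽ_{n,m} X + f̃_{n,m} Y + g̃_{n,m} X Y + k̃_{n,m}`; it is `p` built from the
data `t` with parameters `γ` and `0`. -/
def qMap (N M : ℕ) (x y : ℕ → ℝ) (t : ℕ → ℕ → ℝ) (c : ℕ → ℕ → ℝ) (n m : ℕ) (X Y : ℝ) : ℝ :=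
  pMap N M x y t t c (fun _ _ => 0) n m X Y

/-- `φ_n` (resp. `ψ_m`): the affine map of `[x₀, x_N]` onto `[x_{n-1}, x_n]`. -/
def phiMap (N : ℕ) (x : ℕ → ℝ) (n : ℕ) (X : ℝ) : ℝ :=
  x (n-1) + (x n - x (n-1)) * (X - x 0) / (x N - x 0)

/-- Validity of generalized interpolation data: `N, M ≥ 1`, strictly increasing knots,
`|α_{n,m}| < 1` and `|β_{n,m}| + |γ_{n,m}| < 1`. -/
structure DataOK (N M : ℕ) (x y : ℕ → ℝ) (a b c : ℕ → ℕ → ℝ) : Prop where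
  hN : 1 ≤ N
  hM : 1 ≤ M
  hx : ∀ i < N, x i < x (i+1)
  hy : ∀ j < M, y j < y (j+1)
  ha : ∀ n m, 1 ≤ n → n ≤ N → 1 ≤ m → m ≤ M → |a n m| < 1
  hbc : ∀ n m, 1 ≤ n → n ≤ N → 1 ≤ m → m ≤ M → |b n m| + |c n m| < 1

/-- `(F₁, F₂)` is the CHFIS pair for the generalized interpolation data. -/
def IsCHFIS (N M : ℕ) (x y : ℕ → ℝ) (z t : ℕ → ℕ → ℝ) (a b c : ℕ → ℕ → ℝ)
    (F₁ F₂ : ℝ → ℝ → ℝ) : Prop :=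
  ContinuousOn (fun P : ℝ × ℝ => F₁ P.1 P.2) (Icc (x 0) (x N) ×ˢ Icc (y 0) (y M)) ∧
  ContinuousOn (fun P : ℝ × ℝ => F₂ P.1 P.2) (Icc (x 0) (x N) ×ˢ Icc (y 0) (y M)) ∧
  (∀ i ≤ N, ∀ j ≤ M, F₁ (x i) (y j) = z i j ∧ F₂ (x i) (y j) = t i j) ∧
  ∀ n m, 1 ≤ n → n ≤ N → 1 ≤ m → m ≤ M →
    ∀ X ∈ Icc (x 0) (x N), ∀ Y ∈ Icc (y 0) (y M),
      F₁ (phiMap N x n X) (phiMap M y m Y)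
        = a n m * F₁ X Y + b n m * F₂ X Y + pMap N M x y z t a b n m X Y ∧
      F₂ (phiMap N x n X) (phiMap M y m Y)
        = c n m * F₂ X Y + qMap N M x y t c n m X Y

/-- The invariance-of-ratio condition between the knots `x, y` and the knots `xs, ys`. -/
def RatioInv (N M : ℕ) (x y xs ys : ℕ → ℝ) : Prop :=
  (∀ n, 1 ≤ n → n ≤ N → (x 0 - x N) / (xs 0 - xs N) = (x (n-1) - x n) / (xs (n-1) - xs n)) ∧
  (∀ m, 1 ≤ m → m ≤ M → (y 0 - y M) / (ys 0 - ys M) = (y (m-1) - y m) / (ys (m-1) - ys m))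

/-- `T : [x₀, x_N] → [xs₀, xs_N]` is the cell-wise affine transfer map, sending
`[x_{n-1}, x_n]` affinely onto `[xs_{n-1}, xs_n]` (one coordinate of `R` resp. `K`). -/
def IsTransfer (N : ℕ) (x xs : ℕ → ℝ) (T : ℝ → ℝ) : Prop :=
  ∀ n, 1 ≤ n → n ≤ N → ∀ X ∈ Icc (x (n-1)) (x n),
    T X = xs (n-1) + (xs n - xs (n-1)) * (X - x (n-1)) / (x n - x (n-1))

/-- `max { |a n m| : 1 ≤ n ≤ N, 1 ≤ m ≤ M }` (as an `sSup`). -/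
def supParam (N M : ℕ) (a : ℕ → ℕ → ℝ) : ℝ :=
  sSup {v : ℝ | ∃ n m, 1 ≤ n ∧ n ≤ N ∧ 1 ≤ m ∧ m ≤ M ∧ v = |a n m|}

/-- `max { (|x_n - xs_n| + |y_m - ys_m|)^δ : 0 ≤ n ≤ N, 0 ≤ m ≤ M }` (as an `sSup`). -/
def supKnotDiff (N M : ℕ) (x xs y ys : ℕ → ℝ) (d : ℝ) : ℝ :=
  sSup {v : ℝ | ∃ n m, n ≤ N ∧ m ≤ M ∧ v = (|x n - xs n| + |y m - ys m|) ^ d}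

/-- `max { |z_{n,m} - zs_{n,m}| : 0 ≤ n ≤ N, 0 ≤ m ≤ M }` (as an `sSup`). -/
def supValDiff (N M : ℕ) (z zs : ℕ → ℕ → ℝ) : ℝ :=
  sSup {v : ℝ | ∃ n m, n ≤ N ∧ m ≤ M ∧ v = |z n m - zs n m|}

/-- `max { |z_{i,j} - z_{k,l}| : 0 ≤ i,j,k,l ≤ N }` (as an `sSup`). -/
def supPairDiff (N : ℕ) (z : ℕ → ℕ → ℝ) : ℝ :=
  sSup {v : ℝ | ∃ i j k l, i ≤ N ∧ j ≤ N ∧ k ≤ N ∧ l ≤ N ∧ v = |z i j - z k l|}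

/-!
Invariance of ratio makes the two knot families affine images of each other:
`x k = x 0 + L * (xs k - xs 0)` with `L = (x 0 - x N) / (xs 0 - xs N) > 0`, and likewise in `y`.
Hence on `S*` the cell-wise map `K` is the single affine map `A X = x 0 + L * (X - xs 0)` (times
its `y`-analogue `B`). `A` conjugates `φ*_n` to `φ_n`, and since `e, f, g, k` see the knots only
through `x 0, x N, y 0, y M`, one checks `p (A X) (B Y) = p* X Y` (and the same for `q`). So the
self-referential equations of `F` on `S` are exactly those of `F ∘ (A, B)` on `S*`; the converse
direction is the same argument for `A⁻¹`, and finally `F ∘ (A, B)` and `F ∘ K` agree on `S*`.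
-/

section Knots

variable {N : ℕ} {x : ℕ → ℝ}

theorem strictMonoOn_knots (hx : ∀ i < N, x i < x (i + 1)) : StrictMonoOn x (Iic N) :=
  strictMonoOn_Iic_of_lt_succ fun m hm => by simpa using hx m hm

theorem knot_mem_Icc (hx : ∀ i < N, x i < x (i + 1)) {i : ℕ} (hi : i ≤ N) :
    x i ∈ Icc (x 0) (x N) :=
  ⟨(strictMonoOn_knots hx).monotoneOn (Nat.zero_le _ : 0 ∈ Iic N) hi (Nat.zero_le i),
    (strictMonoOn_knots hx).monotoneOn hi (le_refl N : N ∈ Iic N) hi⟩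

theorem knot_pred_lt (hx : ∀ i < N, x i < x (i + 1)) {n : ℕ} (hn : 1 ≤ n) (hnN : n ≤ N) :
    x (n - 1) < x n := by
  simpa [Nat.sub_add_cancel hn] using hx (n - 1) (by omega)

theorem knot_zero_lt_last (hx : ∀ i < N, x i < x (i + 1)) (hN : 1 ≤ N) : x 0 < x N :=
  (strictMonoOn_knots hx) (Nat.zero_le _ : 0 ∈ Iic N) (le_refl N : N ∈ Iic N) hN

theorem exists_cell_mem (hx : ∀ i < N, x i < x (i + 1)) (hN : 1 ≤ N) {X : ℝ}
    (hX : X ∈ Icc (x 0) (x N)) : ∃ n, 1 ≤ n ∧ n ≤ N ∧ X ∈ Icc (x (n - 1)) (x n) := by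
  induction N with
  | zero => omega
  | succ k ih =>
    rcases le_or_gt X (x k) with hXk | hXk
    · rcases Nat.eq_zero_or_pos k with rfl | hk
      · exact ⟨1, le_rfl, le_rfl, hX⟩
      · obtain ⟨n, h1n, hnk, hXn⟩ := ih (fun i hi => hx i (by omega)) hk ⟨hX.1, hXk⟩
        exact ⟨n, h1n, by omega, hXn⟩
    · exact ⟨k + 1, by omega, le_rfl, hXk.le, hX.2⟩

theorem phiMap_mem_Icc (hx : ∀ i < N, x i < x (i + 1)) {n : ℕ} (hn : 1 ≤ n) (hnN : n ≤ N)
    {X : ℝ} (hX : X ∈ Icc (x 0) (x N)) : phiMap N x n X ∈ Icc (x 0) (x N) := by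
  have hstep := knot_pred_lt hx hn hnN
  have hlen : 0 < x N - x 0 := sub_pos.2 (knot_zero_lt_last hx (hn.trans hnN))
  set s := (X - x 0) / (x N - x 0)
  have hs0 : 0 ≤ s := div_nonneg (sub_nonneg.2 hX.1) hlen.le
  have hs1 : s ≤ 1 := (div_le_one hlen).2 (by linarith [hX.2])
  have hphi : phiMap N x n X = x (n - 1) + (x n - x (n - 1)) * s := by
    simp only [phiMap, s]; ring
  have hlo := mul_nonneg (sub_nonneg.2 hstep.le) hs0
  have hhi := mul_nonneg (sub_nonneg.2 hstep.le) (sub_nonneg.2 hs1)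
  have hcell := knot_mem_Icc hx (by omega : n - 1 ≤ N)
  have hcell' := knot_mem_Icc hx hnN
  rw [hphi]
  constructor <;> linarith [hcell.1, hcell'.2]

end Knots

section Transfer

variable {N : ℕ} {x xs : ℕ → ℝ}

theorem knot_eq_affine_of_ratio (hxs : ∀ i < N, xs i < xs (i + 1))
    (hr : ∀ n, 1 ≤ n → n ≤ N →
      (x 0 - x N) / (xs 0 - xs N) = (x (n - 1) - x n) / (xs (n - 1) - xs n)) :
    ∀ n ≤ N, x n = x 0 + (x 0 - x N) / (xs 0 - xs N) * (xs n - xs 0) := by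
  intro n hn
  induction n with
  | zero => ring
  | succ k ih =>
    have hstep := hr (k + 1) (by omega) hn
    rw [Nat.add_sub_cancel, eq_div_iff (sub_ne_zero.2 (hxs k hn).ne)] at hstep
    linear_combination ih (by omega) + hstep

theorem IsTransfer.eq_affine {L : ℝ} {K : ℝ → ℝ} (hK : IsTransfer N xs x K)
    (hxs : ∀ i < N, xs i < xs (i + 1)) (hN : 1 ≤ N)
    (hrel : ∀ k ≤ N, x k = x 0 + L * (xs k - xs 0)) {X : ℝ} (hX : X ∈ Icc (xs 0) (xs N)) :
    K X = x 0 + L * (X - xs 0) := by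
  obtain ⟨n, hn, hnN, hXn⟩ := exists_cell_mem hxs hN hX
  have hcell : xs n - xs (n - 1) ≠ 0 := (sub_pos.2 (knot_pred_lt hxs hn hnN)).ne'
  rw [hK n hn hnN X hXn, hrel n hnN, hrel (n - 1) (by omega)]
  field_simp
  ring

end Transfer

section AffineChange

variable {N M : ℕ} {x y xs ys : ℕ → ℝ} {L Mu : ℝ}

theorem pMap_comp_affine (z t a b : ℕ → ℕ → ℝ) (n m : ℕ)
    (hxN : x N = x 0 + L * (xs N - xs 0)) (hyM : y M = y 0 + Mu * (ys M - ys 0))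
    (hL : L ≠ 0) (hMu : Mu ≠ 0) (hxs : xs N - xs 0 ≠ 0) (hys : ys M - ys 0 ≠ 0)
    (X Y : ℝ) :
    pMap N M x y z t a b n m (x 0 + L * (X - xs 0)) (y 0 + Mu * (Y - ys 0))
      = pMap N M xs ys z t a b n m X Y := by
  have hxs' : xs 0 - xs N ≠ 0 := by rwa [← neg_ne_zero, neg_sub]
  have hys' : ys 0 - ys M ≠ 0 := by rwa [← neg_ne_zero, neg_sub]
  simp only [pMap, kCoef, eCoef, fCoef, gCoef, hxN, hyM]
  field_simp
  ring

theorem phiMap_comp_affine (hrel : ∀ k ≤ N, x k = x 0 + L * (xs k - xs 0)) {n : ℕ}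
    (hn : 1 ≤ n) (hnN : n ≤ N) (hL : L ≠ 0) (hxs : xs N - xs 0 ≠ 0) (X : ℝ) :
    phiMap N x n (x 0 + L * (X - xs 0)) = x 0 + L * (phiMap N xs n X - xs 0) := by
  simp only [phiMap, hrel n hnN, hrel (n - 1) (by omega), hrel N le_rfl]
  field_simp
  ring

theorem add_mul_sub_mem_Icc {a b c X : ℝ} (hL : 0 ≤ L) (hX : X ∈ Icc a b) :
    c + L * (X - a) ∈ Icc c (c + L * (b - a)) :=
  ⟨by nlinarith [hX.1], by nlinarith [hX.2]⟩

theorem IsCHFIS.comp_affine {z t a b c : ℕ → ℕ → ℝ} {F₁ F₂ : ℝ → ℝ → ℝ}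
    (hL : 0 < L) (hMu : 0 < Mu) (hxs : xs N - xs 0 ≠ 0) (hys : ys M - ys 0 ≠ 0)
    (hrelx : ∀ k ≤ N, x k = x 0 + L * (xs k - xs 0))
    (hrely : ∀ k ≤ M, y k = y 0 + Mu * (ys k - ys 0))
    (hF : IsCHFIS N M x y z t a b c F₁ F₂) :
    IsCHFIS N M xs ys z t a b c
      (fun X Y => F₁ (x 0 + L * (X - xs 0)) (y 0 + Mu * (Y - ys 0)))
      (fun X Y => F₂ (x 0 + L * (X - xs 0)) (y 0 + Mu * (Y - ys 0))) := by
  obtain ⟨hc₁, hc₂, hknots, hfun⟩ := hF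
  have hAx : ∀ X ∈ Icc (xs 0) (xs N), x 0 + L * (X - xs 0) ∈ Icc (x 0) (x N) :=
    fun X hX => hrelx N le_rfl ▸ add_mul_sub_mem_Icc hL.le hX
  have hAy : ∀ Y ∈ Icc (ys 0) (ys M), y 0 + Mu * (Y - ys 0) ∈ Icc (y 0) (y M) :=
    fun Y hY => hrely M le_rfl ▸ add_mul_sub_mem_Icc hMu.le hY
  have hA : MapsTo (fun P : ℝ × ℝ => (x 0 + L * (P.1 - xs 0), y 0 + Mu * (P.2 - ys 0)))
      (Icc (xs 0) (xs N) ×ˢ Icc (ys 0) (ys M)) (Icc (x 0) (x N) ×ˢ Icc (y 0) (y M)) :=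
    fun P hP => ⟨hAx P.1 hP.1, hAy P.2 hP.2⟩
  have hAc : Continuous fun P : ℝ × ℝ =>
      (x 0 + L * (P.1 - xs 0), y 0 + Mu * (P.2 - ys 0)) := by
    fun_prop
  refine ⟨hc₁.comp hAc.continuousOn hA, hc₂.comp hAc.continuousOn hA, ?_, ?_⟩
  · intro i hi j hj
    simpa only [← hrelx i hi, ← hrely j hj] using hknots i hi j hj
  · intro n m hn hnN hm hmM X hX Y hY
    obtain ⟨h₁, h₂⟩ := hfun n m hn hnN hm hmM _ (hAx X hX) _ (hAy Y hY)
    simp only [qMap] at h₂ ⊢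
    rw [← phiMap_comp_affine hrelx hn hnN hL.ne' hxs,
      ← phiMap_comp_affine hrely hm hmM hMu.ne' hys]
    rw [pMap_comp_affine _ _ _ _ _ _ (hrelx N le_rfl) (hrely M le_rfl)
      hL.ne' hMu.ne' hxs hys] at h₁ h₂
    exact ⟨h₁, h₂⟩

theorem isCHFIS_comp_affine_iff {z t a b c : ℕ → ℕ → ℝ} {F₁ F₂ : ℝ → ℝ → ℝ}
    (hL : 0 < L) (hMu : 0 < Mu) (hxs : xs N - xs 0 ≠ 0) (hys : ys M - ys 0 ≠ 0)
    (hrelx : ∀ k ≤ N, x k = x 0 + L * (xs k - xs 0))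
    (hrely : ∀ k ≤ M, y k = y 0 + Mu * (ys k - ys 0)) :
    IsCHFIS N M x y z t a b c F₁ F₂ ↔
      IsCHFIS N M xs ys z t a b c
        (fun X Y => F₁ (x 0 + L * (X - xs 0)) (y 0 + Mu * (Y - ys 0)))
        (fun X Y => F₂ (x 0 + L * (X - xs 0)) (y 0 + Mu * (Y - ys 0))) := by
  refine ⟨IsCHFIS.comp_affine hL hMu hxs hys hrelx hrely, fun hG => ?_⟩
  have hrelxs : ∀ k ≤ N, xs k = xs 0 + L⁻¹ * (x k - x 0) := fun k hk => by
    rw [hrelx k hk]; field_simp; ring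
  have hrelys : ∀ k ≤ M, ys k = ys 0 + Mu⁻¹ * (y k - y 0) := fun k hk => by
    rw [hrely k hk]; field_simp; ring
  have hx : x N - x 0 ≠ 0 := by
    rw [hrelx N le_rfl, add_sub_cancel_left]; exact mul_ne_zero hL.ne' hxs
  have hy : y M - y 0 ≠ 0 := by
    rw [hrely M le_rfl, add_sub_cancel_left]; exact mul_ne_zero hMu.ne' hys
  have hinvx : ∀ X, x 0 + L * (xs 0 + L⁻¹ * (X - x 0) - xs 0) = X := fun X => by
    field_simp; ring
  have hinvy : ∀ Y, y 0 + Mu * (ys 0 + Mu⁻¹ * (Y - y 0) - ys 0) = Y := fun Y => by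
    field_simp; ring
  simpa only [hinvx, hinvy] using
    hG.comp_affine (inv_pos.2 hL) (inv_pos.2 hMu) hx hy hrelxs hrelys

end AffineChange

theorem IsCHFIS.congr {N M : ℕ} {x y : ℕ → ℝ} {z t a b c : ℕ → ℕ → ℝ}
    {F₁ F₂ G₁ G₂ : ℝ → ℝ → ℝ}
    (hx : ∀ i < N, x i < x (i + 1)) (hy : ∀ j < M, y j < y (j + 1))
    (hF : IsCHFIS N M x y z t a b c F₁ F₂)
    (hFG : ∀ X ∈ Icc (x 0) (x N), ∀ Y ∈ Icc (y 0) (y M),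
      F₁ X Y = G₁ X Y ∧ F₂ X Y = G₂ X Y) :
    IsCHFIS N M x y z t a b c G₁ G₂ := by
  obtain ⟨hc₁, hc₂, hknots, hfun⟩ := hF
  refine ⟨hc₁.congr fun P hP => (hFG P.1 hP.1 P.2 hP.2).1.symm,
    hc₂.congr fun P hP => (hFG P.1 hP.1 P.2 hP.2).2.symm, fun i hi j hj => ?_,
    fun n m hn hnN hm hmM X hX Y hY => ?_⟩
  · obtain ⟨e₁, e₂⟩ := hFG _ (knot_mem_Icc hx hi) _ (knot_mem_Icc hy hj)
    rw [← e₁, ← e₂]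
    exact hknots i hi j hj
  · obtain ⟨e₁, e₂⟩ := hFG X hX Y hY
    obtain ⟨e₃, e₄⟩ := hFG _ (phiMap_mem_Icc hx hn hnN hX) _ (phiMap_mem_Icc hy hm hmM hY)
    rw [← e₁, ← e₂, ← e₃, ← e₄]
    exact hfun n m hn hnN hm hmM X hX Y hY

theorem isCHFIS_congr {N M : ℕ} {x y : ℕ → ℝ} {z t a b c : ℕ → ℕ → ℝ}
    {F₁ F₂ G₁ G₂ : ℝ → ℝ → ℝ}
    (hx : ∀ i < N, x i < x (i + 1)) (hy : ∀ j < M, y j < y (j + 1))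
    (hFG : ∀ X ∈ Icc (x 0) (x N), ∀ Y ∈ Icc (y 0) (y M),
      F₁ X Y = G₁ X Y ∧ F₂ X Y = G₂ X Y) :
    IsCHFIS N M x y z t a b c F₁ F₂ ↔ IsCHFIS N M x y z t a b c G₁ G₂ :=
  ⟨fun hF => hF.congr hx hy hFG,
    fun hG => hG.congr hx hy fun X hX Y hY => (hFG X hX Y hY).imp Eq.symm Eq.symm⟩

/-- `(F₁, F₂)` is the CHFIS pair for `Δ` iff `(F₁ ∘ K, F₂ ∘ K)` is the CHFIS
pair for `Δ*`, under the invariance-of-ratio condition (same `z`, `t`, `α`, `β`, `γ`). -/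
theorem chfis_transfer_iff (N M : ℕ) (x y xs ys : ℕ → ℝ) (z t : ℕ → ℕ → ℝ)
    (a b c : ℕ → ℕ → ℝ)
    (hD : DataOK N M x y a b c) (hDs : DataOK N M xs ys a b c)
    (hratio : RatioInv N M x y xs ys)
    (KX KY : ℝ → ℝ)
    (hKX : IsTransfer N xs x KX) (hKY : IsTransfer M ys y KY)
    (F₁ F₂ : ℝ → ℝ → ℝ) :
    IsCHFIS N M x y z t a b c F₁ F₂ ↔
      IsCHFIS N M xs ys z t a b c
        (fun X Y => F₁ (KX X) (KY Y)) (fun X Y => F₂ (KX X) (KY Y)) := by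
  have hxs := sub_pos.2 (knot_zero_lt_last hDs.hx hDs.hN)
  have hys := sub_pos.2 (knot_zero_lt_last hDs.hy hDs.hM)
  have hL : 0 < (x 0 - x N) / (xs 0 - xs N) :=
    div_pos_of_neg_of_neg (sub_neg.2 (knot_zero_lt_last hD.hx hD.hN)) (by linarith)
  have hMu : 0 < (y 0 - y M) / (ys 0 - ys M) :=
    div_pos_of_neg_of_neg (sub_neg.2 (knot_zero_lt_last hD.hy hD.hM)) (by linarith)
  have hrelx := knot_eq_affine_of_ratio hDs.hx hratio.1
  have hrely := knot_eq_affine_of_ratio hDs.hy hratio.2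
  rw [isCHFIS_comp_affine_iff hL hMu hxs.ne' hys.ne' hrelx hrely]
  refine isCHFIS_congr hDs.hx hDs.hy fun X hX Y hY => ?_
  rw [hKX.eq_affine hDs.hx hDs.hN hrelx hX, hKY.eq_affine hDs.hy hDs.hM hrely hY]
  exact ⟨rfl, rfl⟩

end
end

section
/- Let (F₁, F₂) and (G₁, G₂) be the CHFIS pairs, with the same parameters α_{n,m}, β_{n,m}, γ_{n,m}, for generalized interpolation data Δ = {(x_i, y_j, z_{i,j}, t_{i,j})} and Δ* = {(x_i, y_j, z*_{i,j}, t_{i,j})} respectively (same knots and same t-values, perturbed z-values). Then sup_{(x,y) ∈ S} |F₁(x,y) − G₁(x,y)| ≤ (4(1+α)/(1−α)) · max{ |z_{n,m} − z*_{n,m}| : 0 ≤ n ≤ N, 0 ≤ m ≤ M }, where α = max_{n,m}|α_{n,m}|. -/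
open Real Set

noncomputable section

lemma gCoef_clear (N M : ℕ) (x y : ℕ → ℝ) (z t : ℕ → ℕ → ℝ) (a b : ℕ → ℕ → ℝ) (n m : ℕ)
    (hx0 : x 0 - x N ≠ 0) (hy0 : y 0 - y M ≠ 0) :
    gCoef N M x y z t a b n m * ((x 0 - x N) * (y 0 - y M))
      = z (n-1) (m-1) - z (n-1) m - z n (m-1) + z n m
        - a n m * eva N M z - b n m * eva N M t := by
  unfold gCoef
  exact div_mul_cancel₀ _ (mul_ne_zero hx0 hy0)

lemma eCoef_clear (N M : ℕ) (x y : ℕ → ℝ) (z t : ℕ → ℕ → ℝ) (a b : ℕ → ℕ → ℝ) (n m : ℕ)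
    (hx0 : x 0 - x N ≠ 0) :
    eCoef N M x y z t a b n m * (x 0 - x N)
      = z (n-1) (m-1) - z n (m-1) - a n m * (z 0 0 - z N 0) - b n m * (t 0 0 - t N 0)
        - gCoef N M x y z t a b n m * (x 0 - x N) * y 0 := by
  unfold eCoef
  exact div_mul_cancel₀ _ hx0

lemma fCoef_clear (N M : ℕ) (x y : ℕ → ℝ) (z t : ℕ → ℕ → ℝ) (a b : ℕ → ℕ → ℝ) (n m : ℕ)
    (hy0 : y 0 - y M ≠ 0) :
    fCoef N M x y z t a b n m * (y 0 - y M)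
      = z (n-1) (m-1) - z (n-1) m - a n m * (z 0 0 - z 0 M) - b n m * (t 0 0 - t 0 M)
        - gCoef N M x y z t a b n m * (y 0 - y M) * x 0 := by
  unfold fCoef
  exact div_mul_cancel₀ _ hy0

lemma pMap_corner00 (N M : ℕ) (x y : ℕ → ℝ) (z t : ℕ → ℕ → ℝ) (a b : ℕ → ℕ → ℝ) (n m : ℕ)
    (hx0 : x 0 - x N ≠ 0) (hy0 : y 0 - y M ≠ 0) :
    pMap N M x y z t a b n m (x 0) (y 0) = z (n-1) (m-1) - a n m * z 0 0 - b n m * t 0 0 := by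
  have hg := gCoef_clear N M x y z t a b n m hx0 hy0
  have he := eCoef_clear N M x y z t a b n m hx0
  have hf := fCoef_clear N M x y z t a b n m hy0
  unfold pMap kCoef eva at *
  linear_combination he + hf - hg

lemma pMap_cornerN0 (N M : ℕ) (x y : ℕ → ℝ) (z t : ℕ → ℕ → ℝ) (a b : ℕ → ℕ → ℝ) (n m : ℕ)
    (hx0 : x 0 - x N ≠ 0) (hy0 : y 0 - y M ≠ 0) :
    pMap N M x y z t a b n m (x N) (y 0) = z n (m-1) - a n m * z N 0 - b n m * t N 0 := by
  have hg := gCoef_clear N M x y z t a b n m hx0 hy0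
  have hf := fCoef_clear N M x y z t a b n m hy0
  unfold pMap kCoef eva at *
  linear_combination hf - hg

lemma pMap_corner0M (N M : ℕ) (x y : ℕ → ℝ) (z t : ℕ → ℕ → ℝ) (a b : ℕ → ℕ → ℝ) (n m : ℕ)
    (hx0 : x 0 - x N ≠ 0) (hy0 : y 0 - y M ≠ 0) :
    pMap N M x y z t a b n m (x 0) (y M) = z (n-1) m - a n m * z 0 M - b n m * t 0 M := by
  have hg := gCoef_clear N M x y z t a b n m hx0 hy0
  have he := eCoef_clear N M x y z t a b n m hx0
  unfold pMap kCoef eva at *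
  linear_combination he - hg

lemma pMap_cornerNM (N M : ℕ) (x y : ℕ → ℝ) (z t : ℕ → ℕ → ℝ) (a b : ℕ → ℕ → ℝ) (n m : ℕ) :
    pMap N M x y z t a b n m (x N) (y M) = z n m - a n m * z N M - b n m * t N M := by
  unfold pMap kCoef
  ring
lemma mono_knots (x : ℕ → ℝ) (N : ℕ) (hx : ∀ i < N, x i < x (i+1)) :
    ∀ j ≤ N, ∀ i ≤ j, x i ≤ x j := by
  intro j
  induction j with
  | zero =>
    intro _ i hi
    have : i = 0 := Nat.le_zero.mp hi
    simp [this]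
  | succ j ih =>
    intro hj i hi
    rcases Nat.lt_or_ge i (j+1) with h | h
    · exact le_trans (ih (by omega) i (by omega)) (le_of_lt (hx j (by omega)))
    · have : i = j + 1 := by omega
      subst this; exact le_refl _

lemma cover_knots (x : ℕ → ℝ) :
    ∀ N, 1 ≤ N → (∀ i < N, x i < x (i+1)) → ∀ X, x 0 ≤ X → X ≤ x N →
    ∃ n, 1 ≤ n ∧ n ≤ N ∧ x (n-1) ≤ X ∧ X ≤ x n := by
  intro N
  induction N with
  | zero => omega
  | succ N ih =>
    intro _ hx X h0 hN
    rcases Nat.eq_zero_or_pos N with h | h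
    · subst h; exact ⟨1, le_refl _, le_refl _, h0, hN⟩
    · by_cases hXN : X ≤ x N
      · obtain ⟨n, h1, h2, h3, h4⟩ := ih h (fun i hi => hx i (by omega)) X h0 hXN
        exact ⟨n, h1, by omega, h3, h4⟩
      · refine ⟨N+1, by omega, le_refl _, ?_, hN⟩
        simpa using le_of_lt (not_le.mp hXN)

lemma phi_surj (N : ℕ) (x : ℕ → ℝ) (n : ℕ) (h0N : x 0 < x N) (hcell : x (n-1) < x n)
    (P : ℝ) (h1 : x (n-1) ≤ P) (h2 : P ≤ x n) :
    ∃ X, x 0 ≤ X ∧ X ≤ x N ∧ phiMap N x n X = P := by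
  refine ⟨x 0 + (P - x (n-1)) * (x N - x 0) / (x n - x (n-1)), ?_, ?_, ?_⟩
  · have : 0 ≤ (P - x (n-1)) * (x N - x 0) / (x n - x (n-1)) :=
      div_nonneg (mul_nonneg (by linarith) (by linarith)) (by linarith)
    linarith
  · have h : (P - x (n-1)) * (x N - x 0) / (x n - x (n-1)) ≤ x N - x 0 := by
      rw [div_le_iff₀ (by linarith)]
      nlinarith
    linarith
  · have hne1 : x n - x (n-1) ≠ 0 := ne_of_gt (by linarith)
    have hne2 : x N - x 0 ≠ 0 := ne_of_gt (by linarith)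
    unfold phiMap
    field_simp
    ring

lemma bilinear_bound (e f g k x0 xN y0 yM X Y C : ℝ)
    (hx : x0 < xN) (hy : y0 < yM) (hX : x0 ≤ X) (hX' : X ≤ xN) (hY : y0 ≤ Y) (hY' : Y ≤ yM)
    (h00 : |e*x0 + f*y0 + g*x0*y0 + k| ≤ C)
    (h10 : |e*xN + f*y0 + g*xN*y0 + k| ≤ C)
    (h01 : |e*x0 + f*yM + g*x0*yM + k| ≤ C)
    (h11 : |e*xN + f*yM + g*xN*yM + k| ≤ C) :
    |e*X + f*Y + g*X*Y + k| ≤ C := by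
  set s := (X - x0) / (xN - x0) with hs
  set u := (Y - y0) / (yM - y0) with hu
  have hs0 : 0 ≤ s := div_nonneg (by linarith) (by linarith)
  have hs1 : s ≤ 1 := (div_le_one (by linarith)).mpr (by linarith)
  have hu0 : 0 ≤ u := div_nonneg (by linarith) (by linarith)
  have hu1 : u ≤ 1 := (div_le_one (by linarith)).mpr (by linarith)
  have hXeq : X = x0 + s * (xN - x0) := by
    rw [hs, div_mul_cancel₀ _ (ne_of_gt (by linarith : (0:ℝ) < xN - x0))]; ring
  have hYeq : Y = y0 + u * (yM - y0) := by
    rw [hu, div_mul_cancel₀ _ (ne_of_gt (by linarith : (0:ℝ) < yM - y0))]; ring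
  have key : e*X + f*Y + g*X*Y + k
      = (1-s)*(1-u)*(e*x0 + f*y0 + g*x0*y0 + k) + s*(1-u)*(e*xN + f*y0 + g*xN*y0 + k)
        + (1-s)*u*(e*x0 + f*yM + g*x0*yM + k) + s*u*(e*xN + f*yM + g*xN*yM + k) := by
    rw [hXeq, hYeq]; ring
  have w1 : (0:ℝ) ≤ (1-s)*(1-u) := mul_nonneg (by linarith) (by linarith)
  have w2 : (0:ℝ) ≤ s*(1-u) := mul_nonneg hs0 (by linarith)
  have w3 : (0:ℝ) ≤ (1-s)*u := mul_nonneg (by linarith) hu0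
  have w4 : (0:ℝ) ≤ s*u := mul_nonneg hs0 hu0
  have sumC : (1-s)*(1-u)*C + s*(1-u)*C + (1-s)*u*C + s*u*C = C := by ring
  rw [abs_le] at h00 h01 h10 h11 ⊢
  constructor
  · rw [key]
    have b1 := mul_le_mul_of_nonneg_left h00.1 w1
    have b2 := mul_le_mul_of_nonneg_left h10.1 w2
    have b3 := mul_le_mul_of_nonneg_left h01.1 w3
    have b4 := mul_le_mul_of_nonneg_left h11.1 w4
    linarith [b1, b2, b3, b4, sumC]
  · rw [key]
    have b1 := mul_le_mul_of_nonneg_left h00.2 w1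
    have b2 := mul_le_mul_of_nonneg_left h10.2 w2
    have b3 := mul_le_mul_of_nonneg_left h01.2 w3
    have b4 := mul_le_mul_of_nonneg_left h11.2 w4
    linarith [b1, b2, b3, b4, sumC]

lemma corner_bound (u v aa α Z : ℝ) (hu : |u| ≤ Z) (hv : |v| ≤ Z) (haa : |aa| ≤ α) :
    |u - aa * v| ≤ (1 + α) * Z := by
  have h1 : |u - aa * v| ≤ |u| + |aa * v| := abs_sub u (aa * v)
  have h2 : |aa * v| = |aa| * |v| := abs_mul _ _
  have h3 : |aa| * |v| ≤ α * Z :=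
    mul_le_mul haa hv (abs_nonneg _) (le_trans (abs_nonneg _) haa)
  nlinarith

lemma supParam_finite (N M : ℕ) (a : ℕ → ℕ → ℝ) :
    ({v : ℝ | ∃ n m, 1 ≤ n ∧ n ≤ N ∧ 1 ≤ m ∧ m ≤ M ∧ v = |a n m|}).Finite := by
  apply Set.Finite.subset (((Set.finite_Icc 1 N).prod (Set.finite_Icc 1 M)).image
    (fun p : ℕ × ℕ => |a p.1 p.2|))
  rintro v ⟨n, m, h1, h2, h3, h4, rfl⟩
  exact ⟨(n, m), ⟨⟨h1, h2⟩, ⟨h3, h4⟩⟩, rfl⟩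

lemma supValDiff_finite (N M : ℕ) (z zs : ℕ → ℕ → ℝ) :
    ({v : ℝ | ∃ n m, n ≤ N ∧ m ≤ M ∧ v = |z n m - zs n m|}).Finite := by
  apply Set.Finite.subset (((Set.finite_Icc 0 N).prod (Set.finite_Icc 0 M)).image
    (fun p : ℕ × ℕ => |z p.1 p.2 - zs p.1 p.2|))
  rintro v ⟨n, m, h1, h2, rfl⟩
  exact ⟨(n, m), ⟨⟨Nat.zero_le _, h1⟩, ⟨Nat.zero_le _, h2⟩⟩, rfl⟩

lemma le_supParam (N M : ℕ) (a : ℕ → ℕ → ℝ) (n m : ℕ)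
    (h1 : 1 ≤ n) (h2 : n ≤ N) (h3 : 1 ≤ m) (h4 : m ≤ M) :
    |a n m| ≤ supParam N M a :=
  le_csSup (supParam_finite N M a).bddAbove ⟨n, m, h1, h2, h3, h4, rfl⟩

lemma supParam_nonneg (N M : ℕ) (a : ℕ → ℕ → ℝ) (hN : 1 ≤ N) (hM : 1 ≤ M) :
    0 ≤ supParam N M a :=
  le_trans (abs_nonneg _) (le_supParam N M a 1 1 le_rfl hN le_rfl hM)

lemma supParam_lt_one (N M : ℕ) (a : ℕ → ℕ → ℝ) (hN : 1 ≤ N) (hM : 1 ≤ M)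
    (ha : ∀ n m, 1 ≤ n → n ≤ N → 1 ≤ m → m ≤ M → |a n m| < 1) :
    supParam N M a < 1 := by
  have hne : ({v : ℝ | ∃ n m, 1 ≤ n ∧ n ≤ N ∧ 1 ≤ m ∧ m ≤ M ∧ v = |a n m|}).Nonempty :=
    ⟨|a 1 1|, 1, 1, le_rfl, hN, le_rfl, hM, rfl⟩
  have hmem := hne.csSup_mem (supParam_finite N M a)
  obtain ⟨n, m, h1, h2, h3, h4, hv⟩ := hmem
  rw [supParam, hv]
  exact ha n m h1 h2 h3 h4

lemma le_supValDiff (N M : ℕ) (z zs : ℕ → ℕ → ℝ) (n m : ℕ) (h1 : n ≤ N) (h2 : m ≤ M) :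
    |z n m - zs n m| ≤ supValDiff N M z zs :=
  le_csSup (supValDiff_finite N M z zs).bddAbove ⟨n, m, h1, h2, rfl⟩

lemma supValDiff_nonneg (N M : ℕ) (z zs : ℕ → ℕ → ℝ) : 0 ≤ supValDiff N M z zs :=
  le_trans (abs_nonneg _) (le_supValDiff N M z zs 0 0 (Nat.zero_le _) (Nat.zero_le _))
/-- stability of CHFIS with respect to perturbation of the dependent
variable `z`. -/
theorem chfis_stability_dep (N M : ℕ) (x y : ℕ → ℝ) (z zs t : ℕ → ℕ → ℝ)
    (a b c : ℕ → ℕ → ℝ)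
    (hD : DataOK N M x y a b c)
    (F₁ F₂ G₁ G₂ : ℝ → ℝ → ℝ)
    (hF : IsCHFIS N M x y z t a b c F₁ F₂)
    (hG : IsCHFIS N M x y zs t a b c G₁ G₂) :
    ∀ X ∈ Icc (x 0) (x N), ∀ Y ∈ Icc (y 0) (y M),
      |F₁ X Y - G₁ X Y| ≤
        4 * (1 + supParam N M a) / (1 - supParam N M a) * supValDiff N M z zs := by
  obtain ⟨hN, hM, hx, hy, ha, hbc⟩ := hD
  have hxmono := mono_knots x N hx
  have hymono := mono_knots y M hy
  have hx0N : x 0 < x N :=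
    lt_of_lt_of_le (by simpa using hx 0 hN) (hxmono N le_rfl 1 hN)
  have hy0M : y 0 < y M :=
    lt_of_lt_of_le (by simpa using hy 0 hM) (hymono M le_rfl 1 hM)
  have hxne : x 0 - x N ≠ 0 := ne_of_lt (by linarith)
  have hyne : y 0 - y M ≠ 0 := ne_of_lt (by linarith)
  set α := supParam N M a with hαdef
  have hα0 : 0 ≤ α := supParam_nonneg N M a hN hM
  have hα1 : α < 1 := supParam_lt_one N M a hN hM ha
  set Z := supValDiff N M z zs with hZdef
  have hZ0 : 0 ≤ Z := supValDiff_nonneg N M z zs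
  set S : Set (ℝ × ℝ) := Icc (x 0) (x N) ×ˢ Icc (y 0) (y M) with hSdef
  have hScomp : IsCompact S := isCompact_Icc.prod isCompact_Icc
  have hSne : S.Nonempty := ⟨(x 0, y 0), ⟨⟨le_rfl, le_of_lt hx0N⟩, ⟨le_rfl, le_of_lt hy0M⟩⟩⟩
  -- every point of S is in the image of some (φ_n, ψ_m)
  have hdecomp : ∀ P : ℝ × ℝ, P ∈ S → ∃ n m X Y, 1 ≤ n ∧ n ≤ N ∧ 1 ≤ m ∧ m ≤ M ∧
      X ∈ Icc (x 0) (x N) ∧ Y ∈ Icc (y 0) (y M) ∧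
      phiMap N x n X = P.1 ∧ phiMap M y m Y = P.2 := by
    rintro ⟨P1, P2⟩ ⟨⟨hP1a, hP1b⟩, hP2a, hP2b⟩
    obtain ⟨n, hn1, hn2, hn3, hn4⟩ := cover_knots x N hN hx P1 hP1a hP1b
    obtain ⟨m, hm1, hm2, hm3, hm4⟩ := cover_knots y M hM hy P2 hP2a hP2b
    have hcx : x (n-1) < x n := by
      have h := hx (n-1) (by omega)
      have h' : n - 1 + 1 = n := by omega
      rwa [h'] at h
    have hcy : y (m-1) < y m := by
      have h := hy (m-1) (by omega)
      have h' : m - 1 + 1 = m := by omega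
      rwa [h'] at h
    obtain ⟨X, hXa, hXb, hXeq⟩ := phi_surj N x n hx0N hcx P1 hn3 hn4
    obtain ⟨Y, hYa, hYb, hYeq⟩ := phi_surj M y m hy0M hcy P2 hm3 hm4
    exact ⟨n, m, X, Y, hn1, hn2, hm1, hm2, ⟨hXa, hXb⟩, ⟨hYa, hYb⟩, hXeq, hYeq⟩
  -- F₂ = G₂ on S
  have hD2 : ∀ X ∈ Icc (x 0) (x N), ∀ Y ∈ Icc (y 0) (y M), F₂ X Y = G₂ X Y := by
    obtain ⟨P, hPS, hPmax⟩ := hScomp.exists_isMaxOn hSne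
      ((hF.2.1.sub hG.2.1).abs)
    have hP0 : |F₂ P.1 P.2 - G₂ P.1 P.2| ≤ 0 := by
      obtain ⟨n, m, X, Y, h1, h2, h3, h4, hX, hY, hpx, hpy⟩ := hdecomp P hPS
      have e1 := (hF.2.2.2 n m h1 h2 h3 h4 X hX Y hY).2
      have e2 := (hG.2.2.2 n m h1 h2 h3 h4 X hX Y hY).2
      have hmem : ((X, Y) : ℝ × ℝ) ∈ S := ⟨hX, hY⟩
      have hle : |F₂ X Y - G₂ X Y| ≤ |F₂ P.1 P.2 - G₂ P.1 P.2| := hPmax hmem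
      have hc : |c n m| < 1 :=
        lt_of_le_of_lt (le_add_of_nonneg_left (abs_nonneg (b n m))) (hbc n m h1 h2 h3 h4)
      have key : F₂ P.1 P.2 - G₂ P.1 P.2 = c n m * (F₂ X Y - G₂ X Y) := by
        rw [← hpx, ← hpy, e1, e2]; ring
      have habs : |F₂ P.1 P.2 - G₂ P.1 P.2| = |c n m| * |F₂ X Y - G₂ X Y| := by
        rw [key, abs_mul]
      nlinarith [abs_nonneg (F₂ X Y - G₂ X Y), abs_nonneg (c n m)]
    intro X hX Y hY
    have hmem : ((X, Y) : ℝ × ℝ) ∈ S := ⟨hX, hY⟩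
    have hle : |F₂ X Y - G₂ X Y| ≤ |F₂ P.1 P.2 - G₂ P.1 P.2| := hPmax hmem
    have h0 : |F₂ X Y - G₂ X Y| ≤ 0 := le_trans hle hP0
    have h1 : F₂ X Y - G₂ X Y = 0 :=
      abs_eq_zero.mp (le_antisymm h0 (abs_nonneg _))
    linarith
  -- main contraction argument for F₁ - G₁
  obtain ⟨P, hPS, hPmax⟩ := hScomp.exists_isMaxOn hSne ((hF.1.sub hG.1).abs)
  set sP := |F₁ P.1 P.2 - G₁ P.1 P.2| with hsPdef
  have hsP0 : 0 ≤ sP := abs_nonneg _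
  have hkey : sP ≤ α * sP + (1 + α) * Z := by
    obtain ⟨n, m, X, Y, h1, h2, h3, h4, hX, hY, hpx, hpy⟩ := hdecomp P hPS
    have e1 := (hF.2.2.2 n m h1 h2 h3 h4 X hX Y hY).1
    have e2 := (hG.2.2.2 n m h1 h2 h3 h4 X hX Y hY).1
    have hF2G2 := hD2 X hX Y hY
    have key : F₁ P.1 P.2 - G₁ P.1 P.2
        = a n m * (F₁ X Y - G₁ X Y)
          + (pMap N M x y z t a b n m X Y - pMap N M x y zs t a b n m X Y) := by
      rw [← hpx, ← hpy, e1, e2, hF2G2]; ring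
    -- bound the p-difference using bilinearity
    have hrw : ∀ U V : ℝ, pMap N M x y z t a b n m U V - pMap N M x y zs t a b n m U V
        = (eCoef N M x y z t a b n m - eCoef N M x y zs t a b n m) * U
          + (fCoef N M x y z t a b n m - fCoef N M x y zs t a b n m) * V
          + (gCoef N M x y z t a b n m - gCoef N M x y zs t a b n m) * U * V
          + (kCoef N M x y z t a b n m - kCoef N M x y zs t a b n m) := by
      intro U V; unfold pMap; ring
    have hαnm : |a n m| ≤ α := le_supParam N M a n m h1 h2 h3 h4
    have hWle : ∀ i ≤ N, ∀ j ≤ M, |z i j - zs i j| ≤ Z := fun i hi j hj =>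
      le_supValDiff N M z zs i j hi hj
    have hpd : |pMap N M x y z t a b n m X Y - pMap N M x y zs t a b n m X Y|
        ≤ (1 + α) * Z := by
      rw [hrw X Y]
      apply bilinear_bound _ _ _ _ (x 0) (x N) (y 0) (y M) X Y _ hx0N hy0M
        hX.1 hX.2 hY.1 hY.2
      · rw [← hrw (x 0) (y 0), pMap_corner00 N M x y z t a b n m hxne hyne,
          pMap_corner00 N M x y zs t a b n m hxne hyne]
        have h := corner_bound (z (n-1) (m-1) - zs (n-1) (m-1)) (z 0 0 - zs 0 0) (a n m) α Z
          (hWle (n-1) (by omega) (m-1) (by omega)) (hWle 0 (by omega) 0 (by omega)) hαnm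
        convert h using 2
        ring
      · rw [← hrw (x N) (y 0), pMap_cornerN0 N M x y z t a b n m hxne hyne,
          pMap_cornerN0 N M x y zs t a b n m hxne hyne]
        have h := corner_bound (z n (m-1) - zs n (m-1)) (z N 0 - zs N 0) (a n m) α Z
          (hWle n h2 (m-1) (by omega)) (hWle N le_rfl 0 (by omega)) hαnm
        convert h using 2
        ring
      · rw [← hrw (x 0) (y M), pMap_corner0M N M x y z t a b n m hxne hyne,
          pMap_corner0M N M x y zs t a b n m hxne hyne]
        have h := corner_bound (z (n-1) m - zs (n-1) m) (z 0 M - zs 0 M) (a n m) α Z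
          (hWle (n-1) (by omega) m h4) (hWle 0 (by omega) M le_rfl) hαnm
        convert h using 2
        ring
      · rw [← hrw (x N) (y M), pMap_cornerNM N M x y z t a b n m,
          pMap_cornerNM N M x y zs t a b n m]
        have h := corner_bound (z n m - zs n m) (z N M - zs N M) (a n m) α Z
          (hWle n h2 m h4) (hWle N le_rfl M le_rfl) hαnm
        convert h using 2
        ring
    have hmem : ((X, Y) : ℝ × ℝ) ∈ S := ⟨hX, hY⟩
    have hle : |F₁ X Y - G₁ X Y| ≤ |F₁ P.1 P.2 - G₁ P.1 P.2| := hPmax hmem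
    calc sP = |F₁ P.1 P.2 - G₁ P.1 P.2| := hsPdef
      _ ≤ |a n m * (F₁ X Y - G₁ X Y)|
          + |pMap N M x y z t a b n m X Y - pMap N M x y zs t a b n m X Y| := by
        rw [key]; exact abs_add_le _ _
      _ ≤ α * sP + (1 + α) * Z := by
        have h1' : |a n m * (F₁ X Y - G₁ X Y)| = |a n m| * |F₁ X Y - G₁ X Y| := abs_mul _ _
        have h2' : |a n m| * |F₁ X Y - G₁ X Y| ≤ α * sP :=
          mul_le_mul hαnm hle (abs_nonneg _) hα0
        linarith
  -- conclude
  intro X hX Y hY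
  have hmem : ((X, Y) : ℝ × ℝ) ∈ S := ⟨hX, hY⟩
  have hb : |F₁ X Y - G₁ X Y| ≤ |F₁ P.1 P.2 - G₁ P.1 P.2| := hPmax hmem
  rw [div_mul_eq_mul_div, le_div_iff₀ (by linarith : (0:ℝ) < 1 - α)]
  nlinarith [mul_le_mul_of_nonneg_right hb hα0, mul_nonneg hZ0 hα0]

end
end

section
/- Let (F₁, F₂) and (G₁, G₂) be the CHFIS pairs, with the same parameters α_{n,m}, β_{n,m}, γ_{n,m}, for generalized interpolation data Δ = {(x_i, y_j, z_{i,j}, t_{i,j})} and Δ* = {(x_i, y_j, z_{i,j}, t*_{i,j})} respectively (same knots and same z-values, perturbed hidden-variable values). Then sup_{(x,y) ∈ S} |F₁(x,y) − G₁(x,y)| ≤ (8β/((1−α)(1−γ))) · max{ |t_{n,m} − t*_{n,m}| : 0 ≤ n ≤ N, 0 ≤ m ≤ M }, where α = max_{n,m}|α_{n,m}|, β = max_{n,m}|β_{n,m}|, γ = max_{n,m}|γ_{n,m}|. -/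
open Real Set

noncomputable section

-- AUX LEMMAS
private lemma my_affine_abs_le {A B lo hi C X : ℝ} (h : lo < hi) (hX : X ∈ Icc lo hi)
    (h1 : |A * lo + B| ≤ C) (h2 : |A * hi + B| ≤ C) : |A * X + B| ≤ C := by
  obtain ⟨hXl, hXh⟩ := hX
  rw [abs_le] at h1 h2 ⊢
  have k1 : 0 ≤ (hi - X) * (C - (A * lo + B)) := mul_nonneg (by linarith) (by linarith)
  have k2 : 0 ≤ (X - lo) * (C - (A * hi + B)) := mul_nonneg (by linarith) (by linarith)
  have k3 : 0 ≤ (hi - X) * ((A * lo + B) + C) := mul_nonneg (by linarith) (by linarith)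
  have k4 : 0 ≤ (X - lo) * ((A * hi + B) + C) := mul_nonneg (by linarith) (by linarith)
  constructor <;> nlinarith

private lemma my_bilin_abs_le {e f g k x0 xN y0 yM C X Y : ℝ} (hx : x0 < xN) (hy : y0 < yM)
    (hX : X ∈ Icc x0 xN) (hY : Y ∈ Icc y0 yM)
    (h00 : |e * x0 + f * y0 + g * x0 * y0 + k| ≤ C)
    (hN0 : |e * xN + f * y0 + g * xN * y0 + k| ≤ C)
    (h0M : |e * x0 + f * yM + g * x0 * yM + k| ≤ C)
    (hNM : |e * xN + f * yM + g * xN * yM + k| ≤ C) :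
    |e * X + f * Y + g * X * Y + k| ≤ C := by
  have hx0 : |(f + g * x0) * Y + (e * x0 + k)| ≤ C := by
    apply my_affine_abs_le hy hY
    · have hr : (f + g * x0) * y0 + (e * x0 + k) = e * x0 + f * y0 + g * x0 * y0 + k := by ring
      rw [hr]; exact h00
    · have hr : (f + g * x0) * yM + (e * x0 + k) = e * x0 + f * yM + g * x0 * yM + k := by ring
      rw [hr]; exact h0M
  have hxN : |(f + g * xN) * Y + (e * xN + k)| ≤ C := by
    apply my_affine_abs_le hy hY
    · have hr : (f + g * xN) * y0 + (e * xN + k) = e * xN + f * y0 + g * xN * y0 + k := by ring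
      rw [hr]; exact hN0
    · have hr : (f + g * xN) * yM + (e * xN + k) = e * xN + f * yM + g * xN * yM + k := by ring
      rw [hr]; exact hNM
  have hr : e * X + f * Y + g * X * Y + k = (e + g * Y) * X + (f * Y + k) := by ring
  rw [hr]
  apply my_affine_abs_le hx hX
  · have hr2 : (e + g * Y) * x0 + (f * Y + k) = (f + g * x0) * Y + (e * x0 + k) := by ring
    rw [hr2]; exact hx0
  · have hr2 : (e + g * Y) * xN + (f * Y + k) = (f + g * xN) * Y + (e * xN + k) := by ring
    rw [hr2]; exact hxN

private lemma my_mono {N : ℕ} {x : ℕ → ℝ} (hx : ∀ i < N, x i < x (i+1)) :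
    ∀ i j, i ≤ j → j ≤ N → x i ≤ x j := by
  intro i j hij hjN
  induction j with
  | zero => interval_cases i; exact le_rfl
  | succ j ih =>
    rcases Nat.lt_or_ge i (j+1) with h | h
    · have h1 : x i ≤ x j := ih (by omega) (by omega)
      have h2 : x j < x (j+1) := hx j (by omega)
      linarith
    · have : i = j + 1 := by omega
      rw [this]

private lemma my_exists_cell {N : ℕ} {x : ℕ → ℝ} (hN : 1 ≤ N) (hx : ∀ i < N, x i < x (i+1))
    {X : ℝ} (hX : X ∈ Icc (x 0) (x N)) :
    ∃ n, 1 ≤ n ∧ n ≤ N ∧ X ∈ Icc (x (n-1)) (x n) := by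
  classical
  set n0 := Nat.findGreatest (fun k => x k ≤ X) N with hn0def
  have hn0 : x n0 ≤ X := Nat.findGreatest_spec (P := fun k => x k ≤ X) (Nat.zero_le N) hX.1
  have hn0N : n0 ≤ N := Nat.findGreatest_le N
  by_cases h : n0 = N
  · refine ⟨N, hN, le_refl N, ?_, hX.2⟩
    have h1 : x (N-1) ≤ x N := my_mono hx (N-1) N (by omega) le_rfl
    have h2 : x N ≤ X := by rw [← h]; exact hn0
    exact h1.trans h2
  · refine ⟨n0 + 1, by omega, by omega, ?_, ?_⟩
    · simpa using hn0
    · have := Nat.findGreatest_is_greatest (P := fun k => x k ≤ X) (n := N)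
        (k := n0 + 1) (by omega) (by omega)
      push_neg at this
      exact this.le

private lemma my_phi_surj {N : ℕ} {x : ℕ → ℝ} (hN : 1 ≤ N) (hx : ∀ i < N, x i < x (i+1))
    {n : ℕ} (hn1 : 1 ≤ n) (hnN : n ≤ N) {X' : ℝ} (hX' : X' ∈ Icc (x (n-1)) (x n)) :
    ∃ X ∈ Icc (x 0) (x N), phiMap N x n X = X' := by
  have h0N : x 0 < x N := by
    have h1 : x 0 ≤ x (N-1) := my_mono hx 0 (N-1) (Nat.zero_le _) (by omega)
    have h2 : x (N-1) < x (N-1+1) := hx (N-1) (by omega)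
    have h3 : N - 1 + 1 = N := by omega
    rw [h3] at h2; linarith
  have hcell : x (n-1) < x n := by
    have h2 : x (n-1) < x (n-1+1) := hx (n-1) (by omega)
    have h3 : n - 1 + 1 = n := by omega
    rwa [h3] at h2
  have hd : x n - x (n-1) > 0 := by linarith
  have hD : x N - x 0 > 0 := by linarith
  refine ⟨x 0 + (X' - x (n-1)) * (x N - x 0) / (x n - x (n-1)), ⟨?_, ?_⟩, ?_⟩
  · have := div_nonneg (mul_nonneg (sub_nonneg.2 hX'.1) hD.le) hd.le
    linarith
  · have hle : (X' - x (n-1)) * (x N - x 0) / (x n - x (n-1)) ≤ x N - x 0 := by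
      rw [div_le_iff₀ hd]
      nlinarith [hX'.2]
    linarith
  · unfold phiMap
    field_simp
    ring

private lemma my_pMap_00 (N M : ℕ) (x y : ℕ → ℝ) (z t : ℕ → ℕ → ℝ) (a b : ℕ → ℕ → ℝ)
    (n m : ℕ) (hx : x 0 ≠ x N) (hy : y 0 ≠ y M) :
    pMap N M x y z t a b n m (x 0) (y 0)
      = z (n-1) (m-1) - a n m * z 0 0 - b n m * t 0 0 := by
  have hx' : x 0 - x N ≠ 0 := sub_ne_zero.2 hx
  have hy' : y 0 - y M ≠ 0 := sub_ne_zero.2 hy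
  unfold pMap kCoef eCoef fCoef gCoef eva
  field_simp
  ring

private lemma my_pMap_N0 (N M : ℕ) (x y : ℕ → ℝ) (z t : ℕ → ℕ → ℝ) (a b : ℕ → ℕ → ℝ)
    (n m : ℕ) (hx : x 0 ≠ x N) (hy : y 0 ≠ y M) :
    pMap N M x y z t a b n m (x N) (y 0)
      = z n (m-1) - a n m * z N 0 - b n m * t N 0 := by
  have hx' : x 0 - x N ≠ 0 := sub_ne_zero.2 hx
  have hy' : y 0 - y M ≠ 0 := sub_ne_zero.2 hy
  unfold pMap kCoef eCoef fCoef gCoef eva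
  field_simp
  ring

private lemma my_pMap_0M (N M : ℕ) (x y : ℕ → ℝ) (z t : ℕ → ℕ → ℝ) (a b : ℕ → ℕ → ℝ)
    (n m : ℕ) (hx : x 0 ≠ x N) (hy : y 0 ≠ y M) :
    pMap N M x y z t a b n m (x 0) (y M)
      = z (n-1) m - a n m * z 0 M - b n m * t 0 M := by
  have hx' : x 0 - x N ≠ 0 := sub_ne_zero.2 hx
  have hy' : y 0 - y M ≠ 0 := sub_ne_zero.2 hy
  unfold pMap kCoef eCoef fCoef gCoef eva
  field_simp
  ring

private lemma my_pMap_NM (N M : ℕ) (x y : ℕ → ℝ) (z t : ℕ → ℕ → ℝ) (a b : ℕ → ℕ → ℝ)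
    (n m : ℕ) (hx : x 0 ≠ x N) (hy : y 0 ≠ y M) :
    pMap N M x y z t a b n m (x N) (y M)
      = z n m - a n m * z N M - b n m * t N M := by
  have hx' : x 0 - x N ≠ 0 := sub_ne_zero.2 hx
  have hy' : y 0 - y M ≠ 0 := sub_ne_zero.2 hy
  unfold pMap kCoef eCoef fCoef gCoef eva
  field_simp
  ring

private lemma my_supParam_ge {N M : ℕ} (a : ℕ → ℕ → ℝ) {n m : ℕ}
    (h1 : 1 ≤ n) (h2 : n ≤ N) (h3 : 1 ≤ m) (h4 : m ≤ M) : |a n m| ≤ supParam N M a := by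
  have hfin : {v : ℝ | ∃ n m, 1 ≤ n ∧ n ≤ N ∧ 1 ≤ m ∧ m ≤ M ∧ v = |a n m|}.Finite := by
    apply Set.Finite.subset (((Set.finite_Icc 1 N).prod (Set.finite_Icc 1 M)).image
      (fun p : ℕ × ℕ => |a p.1 p.2|))
    rintro v ⟨n, m, h1, h2, h3, h4, rfl⟩
    exact ⟨(n, m), ⟨⟨h1, h2⟩, ⟨h3, h4⟩⟩, rfl⟩
  exact le_csSup hfin.bddAbove ⟨n, m, h1, h2, h3, h4, rfl⟩

private lemma my_supParam_lt_one {N M : ℕ} {a : ℕ → ℕ → ℝ} (hN : 1 ≤ N) (hM : 1 ≤ M)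
    (h : ∀ n m, 1 ≤ n → n ≤ N → 1 ≤ m → m ≤ M → |a n m| < 1) : supParam N M a < 1 := by
  have hfin : {v : ℝ | ∃ n m, 1 ≤ n ∧ n ≤ N ∧ 1 ≤ m ∧ m ≤ M ∧ v = |a n m|}.Finite := by
    apply Set.Finite.subset (((Set.finite_Icc 1 N).prod (Set.finite_Icc 1 M)).image
      (fun p : ℕ × ℕ => |a p.1 p.2|))
    rintro v ⟨n, m, h1, h2, h3, h4, rfl⟩
    exact ⟨(n, m), ⟨⟨h1, h2⟩, ⟨h3, h4⟩⟩, rfl⟩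
  have hne : {v : ℝ | ∃ n m, 1 ≤ n ∧ n ≤ N ∧ 1 ≤ m ∧ m ≤ M ∧ v = |a n m|}.Nonempty :=
    ⟨|a 1 1|, 1, 1, le_rfl, hN, le_rfl, hM, rfl⟩
  obtain ⟨n, m, h1, h2, h3, h4, heq⟩ := hne.csSup_mem hfin
  rw [supParam, heq]
  exact h n m h1 h2 h3 h4

private lemma my_supParam_nonneg {N M : ℕ} (a : ℕ → ℕ → ℝ) (hN : 1 ≤ N) (hM : 1 ≤ M) :
    0 ≤ supParam N M a :=
  (abs_nonneg _).trans (my_supParam_ge a le_rfl hN le_rfl hM)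

private lemma my_supValDiff_ge {N M : ℕ} (z zs : ℕ → ℕ → ℝ) {n m : ℕ}
    (h2 : n ≤ N) (h4 : m ≤ M) : |z n m - zs n m| ≤ supValDiff N M z zs := by
  have hfin : {v : ℝ | ∃ n m, n ≤ N ∧ m ≤ M ∧ v = |z n m - zs n m|}.Finite := by
    apply Set.Finite.subset (((Set.finite_Iic N).prod (Set.finite_Iic M)).image
      (fun p : ℕ × ℕ => |z p.1 p.2 - zs p.1 p.2|))
    rintro v ⟨n, m, h2, h4, rfl⟩
    exact ⟨(n, m), ⟨h2, h4⟩, rfl⟩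
  exact le_csSup hfin.bddAbove ⟨n, m, h2, h4, rfl⟩

private lemma my_supValDiff_nonneg {N M : ℕ} (z zs : ℕ → ℕ → ℝ) :
    0 ≤ supValDiff N M z zs :=
  (abs_nonneg _).trans (my_supValDiff_ge z zs (Nat.zero_le N) (Nat.zero_le M))
private lemma my_corner_bound {A B cc E : ℝ} (hA : |A| ≤ E) (hB : |B| ≤ E) (hc : |cc| ≤ 1) :
    |A - cc * B| ≤ 2 * E := by
  have h1 : |A - cc * B| ≤ |A| + |cc * B| := abs_sub A (cc * B)
  have h2 : |cc * B| = |cc| * |B| := abs_mul _ _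
  have h3 : |cc| * |B| ≤ 1 * E := mul_le_mul hc hB (abs_nonneg _) zero_le_one
  linarith
/-- stability of the CHFIS `F₁` with respect to perturbation of the hidden
variable `t`. -/
theorem chfis_stability_hidden_F1 (N M : ℕ) (x y : ℕ → ℝ) (z t ts : ℕ → ℕ → ℝ)
    (a b c : ℕ → ℕ → ℝ)
    (hD : DataOK N M x y a b c)
    (F₁ F₂ G₁ G₂ : ℝ → ℝ → ℝ)
    (hF : IsCHFIS N M x y z t a b c F₁ F₂)
    (hG : IsCHFIS N M x y z ts a b c G₁ G₂) :
    ∀ X ∈ Icc (x 0) (x N), ∀ Y ∈ Icc (y 0) (y M),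
      |F₁ X Y - G₁ X Y| ≤
        8 * supParam N M b / ((1 - supParam N M a) * (1 - supParam N M c))
          * supValDiff N M t ts := by
  classical
  obtain ⟨hN, hM, hxlt, hylt, ha, hbc⟩ := hD
  have hx0N : x 0 < x N := by
    have h1 : x 0 ≤ x (N-1) := my_mono hxlt 0 (N-1) (Nat.zero_le _) (by omega)
    have h2 : x (N-1) < x (N-1+1) := hxlt (N-1) (by omega)
    have h3 : N - 1 + 1 = N := by omega
    rw [h3] at h2; linarith
  have hy0M : y 0 < y M := by
    have h1 : y 0 ≤ y (M-1) := my_mono hylt 0 (M-1) (Nat.zero_le _) (by omega)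
    have h2 : y (M-1) < y (M-1+1) := hylt (M-1) (by omega)
    have h3 : M - 1 + 1 = M := by omega
    rw [h3] at h2; linarith
  have hxne : x 0 ≠ x N := ne_of_lt hx0N
  have hyne : y 0 ≠ y M := ne_of_lt hy0M
  set α := supParam N M a with hαdef
  set β := supParam N M b with hβdef
  set γ := supParam N M c with hγdef
  set E := supValDiff N M t ts with hEdef
  have hα1 : α < 1 := my_supParam_lt_one hN hM ha
  have hγ1 : γ < 1 := my_supParam_lt_one hN hM (fun n m h1 h2 h3 h4 =>
    lt_of_le_of_lt (le_add_of_nonneg_left (abs_nonneg _)) (hbc n m h1 h2 h3 h4))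
  have hα0 : 0 ≤ α := my_supParam_nonneg a hN hM
  have hβ0 : 0 ≤ β := my_supParam_nonneg b hN hM
  have hγ0 : 0 ≤ γ := my_supParam_nonneg c hN hM
  have hE0 : 0 ≤ E := my_supValDiff_nonneg t ts
  set S : Set (ℝ × ℝ) := Icc (x 0) (x N) ×ˢ Icc (y 0) (y M) with hSdef
  have hScomp : IsCompact S := isCompact_Icc.prod isCompact_Icc
  have hSne : S.Nonempty := ⟨(x 0, y 0), ⟨⟨le_rfl, hx0N.le⟩, ⟨le_rfl, hy0M.le⟩⟩⟩
  obtain ⟨P₁, hP₁S, hP₁max⟩ := hScomp.exists_isMaxOn hSne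
    (((hF.1).sub (hG.1)).abs :
      ContinuousOn (fun P : ℝ × ℝ => |F₁ P.1 P.2 - G₁ P.1 P.2|) S)
  obtain ⟨P₂, hP₂S, hP₂max⟩ := hScomp.exists_isMaxOn hSne
    (((hF.2.1).sub (hG.2.1)).abs :
      ContinuousOn (fun P : ℝ × ℝ => |F₂ P.1 P.2 - G₂ P.1 P.2|) S)
  set E₁ := |F₁ P₁.1 P₁.2 - G₁ P₁.1 P₁.2| with hE₁def
  set E₂ := |F₂ P₂.1 P₂.2 - G₂ P₂.1 P₂.2| with hE₂def
  have hE₁0 : 0 ≤ E₁ := abs_nonneg _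
  have hE₂0 : 0 ≤ E₂ := abs_nonneg _
  -- bound on the difference of the q-maps, uniformly on S
  have hδq : ∀ n m, 1 ≤ n → n ≤ N → 1 ≤ m → m ≤ M →
      ∀ X ∈ Icc (x 0) (x N), ∀ Y ∈ Icc (y 0) (y M),
      |qMap N M x y t c n m X Y - qMap N M x y ts c n m X Y| ≤ 2 * E := by
    intro n m hn1 hnN hm1 hmM X hX Y hY
    have hcnm : |c n m| ≤ 1 :=
      le_of_lt (lt_of_le_of_lt (le_add_of_nonneg_left (abs_nonneg _)) (hbc n m hn1 hnN hm1 hmM))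
    have hdiff : ∀ X Y : ℝ, qMap N M x y t c n m X Y - qMap N M x y ts c n m X Y
        = (eCoef N M x y t t c (fun _ _ => 0) n m - eCoef N M x y ts ts c (fun _ _ => 0) n m) * X
        + (fCoef N M x y t t c (fun _ _ => 0) n m - fCoef N M x y ts ts c (fun _ _ => 0) n m) * Y
        + (gCoef N M x y t t c (fun _ _ => 0) n m - gCoef N M x y ts ts c (fun _ _ => 0) n m) * X * Y
        + (kCoef N M x y t t c (fun _ _ => 0) n m - kCoef N M x y ts ts c (fun _ _ => 0) n m) := by
      intro X Y
      simp only [qMap, pMap]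
      ring
    rw [hdiff]
    apply my_bilin_abs_le hx0N hy0M hX hY
    · rw [← hdiff (x 0) (y 0)]
      simp only [qMap]
      rw [my_pMap_00 N M x y t t c _ n m hxne hyne, my_pMap_00 N M x y ts ts c _ n m hxne hyne]
      have hr : (t (n-1) (m-1) - c n m * t 0 0 - (fun _ _ => (0:ℝ)) n m * t 0 0)
          - (ts (n-1) (m-1) - c n m * ts 0 0 - (fun _ _ => (0:ℝ)) n m * ts 0 0)
          = (t (n-1) (m-1) - ts (n-1) (m-1)) - c n m * (t 0 0 - ts 0 0) := by simp; ring
      rw [hr]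
      exact my_corner_bound (my_supValDiff_ge t ts (by omega) (by omega))
        (my_supValDiff_ge t ts (Nat.zero_le N) (Nat.zero_le M)) hcnm
    · rw [← hdiff (x N) (y 0)]
      simp only [qMap]
      rw [my_pMap_N0 N M x y t t c _ n m hxne hyne, my_pMap_N0 N M x y ts ts c _ n m hxne hyne]
      have hr : (t n (m-1) - c n m * t N 0 - (fun _ _ => (0:ℝ)) n m * t N 0)
          - (ts n (m-1) - c n m * ts N 0 - (fun _ _ => (0:ℝ)) n m * ts N 0)
          = (t n (m-1) - ts n (m-1)) - c n m * (t N 0 - ts N 0) := by simp; ring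
      rw [hr]
      exact my_corner_bound (my_supValDiff_ge t ts hnN (by omega))
        (my_supValDiff_ge t ts le_rfl (Nat.zero_le M)) hcnm
    · rw [← hdiff (x 0) (y M)]
      simp only [qMap]
      rw [my_pMap_0M N M x y t t c _ n m hxne hyne, my_pMap_0M N M x y ts ts c _ n m hxne hyne]
      have hr : (t (n-1) m - c n m * t 0 M - (fun _ _ => (0:ℝ)) n m * t 0 M)
          - (ts (n-1) m - c n m * ts 0 M - (fun _ _ => (0:ℝ)) n m * ts 0 M)
          = (t (n-1) m - ts (n-1) m) - c n m * (t 0 M - ts 0 M) := by simp; ring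
      rw [hr]
      exact my_corner_bound (my_supValDiff_ge t ts (by omega) hmM)
        (my_supValDiff_ge t ts (Nat.zero_le N) le_rfl) hcnm
    · rw [← hdiff (x N) (y M)]
      simp only [qMap]
      rw [my_pMap_NM N M x y t t c _ n m hxne hyne, my_pMap_NM N M x y ts ts c _ n m hxne hyne]
      have hr : (t n m - c n m * t N M - (fun _ _ => (0:ℝ)) n m * t N M)
          - (ts n m - c n m * ts N M - (fun _ _ => (0:ℝ)) n m * ts N M)
          = (t n m - ts n m) - c n m * (t N M - ts N M) := by simp; ring
      rw [hr]
      exact my_corner_bound (my_supValDiff_ge t ts hnN hmM)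
        (my_supValDiff_ge t ts le_rfl le_rfl) hcnm
  -- bound on the difference of the p-maps, uniformly on S
  have hδp : ∀ n m, 1 ≤ n → n ≤ N → 1 ≤ m → m ≤ M →
      ∀ X ∈ Icc (x 0) (x N), ∀ Y ∈ Icc (y 0) (y M),
      |pMap N M x y z t a b n m X Y - pMap N M x y z ts a b n m X Y| ≤ β * E := by
    intro n m hn1 hnN hm1 hmM X hX Y hY
    have hbnm : |b n m| ≤ β := my_supParam_ge b hn1 hnN hm1 hmM
    have hdiff : ∀ X Y : ℝ, pMap N M x y z t a b n m X Y - pMap N M x y z ts a b n m X Y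
        = (eCoef N M x y z t a b n m - eCoef N M x y z ts a b n m) * X
        + (fCoef N M x y z t a b n m - fCoef N M x y z ts a b n m) * Y
        + (gCoef N M x y z t a b n m - gCoef N M x y z ts a b n m) * X * Y
        + (kCoef N M x y z t a b n m - kCoef N M x y z ts a b n m) := by
      intro X Y
      simp only [pMap]
      ring
    have hcor : ∀ i k : ℕ, i ≤ N → k ≤ M → |b n m * (ts i k - t i k)| ≤ β * E := by
      intro i k hi hk
      rw [abs_mul]
      have h1 : |ts i k - t i k| ≤ E := by
        rw [abs_sub_comm]; exact my_supValDiff_ge t ts hi hk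
      exact mul_le_mul hbnm h1 (abs_nonneg _) hβ0
    rw [hdiff]
    apply my_bilin_abs_le hx0N hy0M hX hY
    · rw [← hdiff (x 0) (y 0), my_pMap_00 N M x y z t a b n m hxne hyne,
        my_pMap_00 N M x y z ts a b n m hxne hyne]
      have hr : (z (n-1) (m-1) - a n m * z 0 0 - b n m * t 0 0)
          - (z (n-1) (m-1) - a n m * z 0 0 - b n m * ts 0 0)
          = b n m * (ts 0 0 - t 0 0) := by ring
      rw [hr]; exact hcor 0 0 (Nat.zero_le N) (Nat.zero_le M)
    · rw [← hdiff (x N) (y 0), my_pMap_N0 N M x y z t a b n m hxne hyne,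
        my_pMap_N0 N M x y z ts a b n m hxne hyne]
      have hr : (z n (m-1) - a n m * z N 0 - b n m * t N 0)
          - (z n (m-1) - a n m * z N 0 - b n m * ts N 0)
          = b n m * (ts N 0 - t N 0) := by ring
      rw [hr]; exact hcor N 0 le_rfl (Nat.zero_le M)
    · rw [← hdiff (x 0) (y M), my_pMap_0M N M x y z t a b n m hxne hyne,
        my_pMap_0M N M x y z ts a b n m hxne hyne]
      have hr : (z (n-1) m - a n m * z 0 M - b n m * t 0 M)
          - (z (n-1) m - a n m * z 0 M - b n m * ts 0 M)
          = b n m * (ts 0 M - t 0 M) := by ring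
      rw [hr]; exact hcor 0 M (Nat.zero_le N) le_rfl
    · rw [← hdiff (x N) (y M), my_pMap_NM N M x y z t a b n m hxne hyne,
        my_pMap_NM N M x y z ts a b n m hxne hyne]
      have hr : (z n m - a n m * z N M - b n m * t N M)
          - (z n m - a n m * z N M - b n m * ts N M)
          = b n m * (ts N M - t N M) := by ring
      rw [hr]; exact hcor N M le_rfl le_rfl
  -- recursion for E₂
  have hE₂rec : E₂ - γ * E₂ ≤ 2 * E := by
    obtain ⟨n, hn1, hnN, hcellX⟩ := my_exists_cell hN hxlt hP₂S.1
    obtain ⟨m, hm1, hmM, hcellY⟩ := my_exists_cell hM hylt hP₂S.2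
    obtain ⟨X, hX, hphiX⟩ := my_phi_surj hN hxlt hn1 hnN hcellX
    obtain ⟨Y, hY, hphiY⟩ := my_phi_surj hM hylt hm1 hmM hcellY
    have hXYS : (X, Y) ∈ S := ⟨hX, hY⟩
    have hFeq := (hF.2.2.2 n m hn1 hnN hm1 hmM X hX Y hY).2
    have hGeq := (hG.2.2.2 n m hn1 hnN hm1 hmM X hX Y hY).2
    have h1 : |F₂ X Y - G₂ X Y| ≤ E₂ := hP₂max hXYS
    have h2 := hδq n m hn1 hnN hm1 hmM X hX Y hY
    have hcγ : |c n m| ≤ γ := my_supParam_ge c hn1 hnN hm1 hmM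
    have hEeq : E₂ = |c n m * (F₂ X Y - G₂ X Y)
        + (qMap N M x y t c n m X Y - qMap N M x y ts c n m X Y)| := by
      rw [hE₂def, ← hphiX, ← hphiY, hFeq, hGeq]
      congr 1; ring
    have hub : |c n m * (F₂ X Y - G₂ X Y)
        + (qMap N M x y t c n m X Y - qMap N M x y ts c n m X Y)| ≤ γ * E₂ + 2 * E := by
      have t1 := abs_add_le (c n m * (F₂ X Y - G₂ X Y))
        (qMap N M x y t c n m X Y - qMap N M x y ts c n m X Y)
      have t2 := abs_mul (c n m) (F₂ X Y - G₂ X Y)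
      have t3 : |c n m| * |F₂ X Y - G₂ X Y| ≤ γ * E₂ :=
        mul_le_mul hcγ h1 (abs_nonneg _) hγ0
      linarith
    have hchain : E₂ ≤ γ * E₂ + 2 * E := hEeq.le.trans hub
    linarith
  -- recursion for E₁
  have hE₁rec : E₁ - α * E₁ ≤ β * E₂ + β * E := by
    obtain ⟨n, hn1, hnN, hcellX⟩ := my_exists_cell hN hxlt hP₁S.1
    obtain ⟨m, hm1, hmM, hcellY⟩ := my_exists_cell hM hylt hP₁S.2
    obtain ⟨X, hX, hphiX⟩ := my_phi_surj hN hxlt hn1 hnN hcellX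
    obtain ⟨Y, hY, hphiY⟩ := my_phi_surj hM hylt hm1 hmM hcellY
    have hXYS : (X, Y) ∈ S := ⟨hX, hY⟩
    have hFeq := (hF.2.2.2 n m hn1 hnN hm1 hmM X hX Y hY).1
    have hGeq := (hG.2.2.2 n m hn1 hnN hm1 hmM X hX Y hY).1
    have h1 : |F₁ X Y - G₁ X Y| ≤ E₁ := hP₁max hXYS
    have h1' : |F₂ X Y - G₂ X Y| ≤ E₂ := hP₂max hXYS
    have h2 := hδp n m hn1 hnN hm1 hmM X hX Y hY
    have haα : |a n m| ≤ α := my_supParam_ge a hn1 hnN hm1 hmM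
    have hbβ : |b n m| ≤ β := my_supParam_ge b hn1 hnN hm1 hmM
    have hEeq : E₁ = |a n m * (F₁ X Y - G₁ X Y) + b n m * (F₂ X Y - G₂ X Y)
        + (pMap N M x y z t a b n m X Y - pMap N M x y z ts a b n m X Y)| := by
      rw [hE₁def, ← hphiX, ← hphiY, hFeq, hGeq]
      congr 1; ring
    have hub : |a n m * (F₁ X Y - G₁ X Y) + b n m * (F₂ X Y - G₂ X Y)
        + (pMap N M x y z t a b n m X Y - pMap N M x y z ts a b n m X Y)|
        ≤ α * E₁ + β * E₂ + β * E := by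
      have t1 := abs_add_le (a n m * (F₁ X Y - G₁ X Y) + b n m * (F₂ X Y - G₂ X Y))
        (pMap N M x y z t a b n m X Y - pMap N M x y z ts a b n m X Y)
      have t2 := abs_add_le (a n m * (F₁ X Y - G₁ X Y)) (b n m * (F₂ X Y - G₂ X Y))
      have t3 := abs_mul (a n m) (F₁ X Y - G₁ X Y)
      have t4 := abs_mul (b n m) (F₂ X Y - G₂ X Y)
      have t5 : |a n m| * |F₁ X Y - G₁ X Y| ≤ α * E₁ :=
        mul_le_mul haα h1 (abs_nonneg _) hα0
      have t6 : |b n m| * |F₂ X Y - G₂ X Y| ≤ β * E₂ :=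
        mul_le_mul hbβ h1' (abs_nonneg _) hβ0
      linarith
    have hchain : E₁ ≤ α * E₁ + β * E₂ + β * E := hEeq.le.trans hub
    linarith
  -- conclusion
  intro X hX Y hY
  have hb1 : |F₁ X Y - G₁ X Y| ≤ E₁ := hP₁max (⟨hX, hY⟩ : (X, Y) ∈ S)
  have hpos : 0 < (1 - α) * (1 - γ) := mul_pos (by linarith) (by linarith)
  rw [div_mul_eq_mul_div, le_div_iff₀ hpos]
  have hmul : |F₁ X Y - G₁ X Y| * ((1 - α) * (1 - γ)) ≤ E₁ * ((1 - α) * (1 - γ)) :=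
    mul_le_mul_of_nonneg_right hb1 hpos.le
  have h4 : (E₁ - α * E₁) * (1 - γ) ≤ (β * E₂ + β * E) * (1 - γ) :=
    mul_le_mul_of_nonneg_right hE₁rec (by linarith)
  have h5 : β * (E₂ - γ * E₂) ≤ β * (2 * E) := mul_le_mul_of_nonneg_left hE₂rec hβ0
  have h6 : 0 ≤ β * E := mul_nonneg hβ0 hE0
  have h7 : 0 ≤ β * γ * E := mul_nonneg (mul_nonneg hβ0 hγ0) hE0
  nlinarith [hmul, h4, h5, h6, h7]

end
end
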